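/- There is no real constant c such that Z(L(G)) ≤ c · B(G) holds for all graphs G. -/

import Mathlib

open scoped BigOperators

namespace Paper

variable {V : Type*}

/-- The zero-forcing closure: vertices that eventually become black starting from `S`. -/
inductive ZFClosure (G : SimpleGraph V) (S : Set V) : V → Prop
  | init {v : V} : v ∈ S → ZFClosure G S v
  | force {v w : V} : ZFClosure G S v → G.Adj v w →
      (∀ u, G.Adj v u → u ≠ w → ZFClosure G S u) → ZFClosure G S w

/-- `S` is a zero-forcing set of `G`. -/
def IsZeroForcingSet (G : SimpleGraph V) (S : Set V) : Prop :=
  ∀ v : V, ZFClosure G S v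

/-- The zero-forcing number `Z(G)`. -/
noncomputable def zfNumber (G : SimpleGraph V) : ℕ :=
  sInf {n | ∃ S : Set V, IsZeroForcingSet G S ∧ S.ncard = n}

/-- A state of the brushing process: the set of vertices that have fired (and hence
are clean), the set of dirty edges, and the number of brushes at each vertex. -/
structure BrushConfig (V : Type*) where
  fired : Set V
  dirty : Set (Sym2 V)
  brushes : V → ℕ

open Classical in
def BrushStep (G : SimpleGraph V) (restricted : Bool) (c c' : BrushConfig V) : Prop :=
  ∃ (v : V) (f : Sym2 V → ℕ),
    v ∉ c.fired ∧
    (∀ e ∈ c.dirty, v ∈ e → if restricted then f e = 1 else 1 ≤ f e) ∧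
    (∑ᶠ e ∈ {e ∈ c.dirty | v ∈ e}, f e) ≤ c.brushes v ∧
    c'.fired = insert v c.fired ∧
    c'.dirty = {e ∈ c.dirty | v ∉ e} ∧
    ∀ w : V, c'.brushes w =
      (if w = v then 0 else c.brushes w) + c.dirty.indicator f s(v, w)

/-- The initial brush configuration `ω` cleans the graph `G`:  starting with every vertex
and every edge dirty, some sequence of firings results in every vertex having fired. -/
def Cleans (G : SimpleGraph V) (restricted : Bool) (ω : V → ℕ) : Prop :=
  ∃ c : BrushConfig V,
    Relation.ReflTransGen (BrushStep G restricted) ⟨∅, G.edgeSet, ω⟩ c ∧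
    c.fired = Set.univ

/-- The brushing number `B(G)` (several brushes may traverse a single edge). -/
noncomputable def brushNumber (G : SimpleGraph V) : ℕ :=
  sInf {n | ∃ ω : V → ℕ, Cleans G false ω ∧ ∑ᶠ v, ω v = n}

/-- The restricted brushing number `b(G)` (each edge is traversed by exactly one brush). -/
noncomputable def brushNumber' (G : SimpleGraph V) : ℕ :=
  sInf {n | ∃ ω : V → ℕ, Cleans G true ω ∧ ∑ᶠ v, ω v = n}

/-!
A triangle's edge set is a fort of the line graph (an edge meeting it at `v` meets both triangle
edges at `v`), and a zero-forcing set meets every fort, so `Z(L(G)) ≥ r` when `G` has `r`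
edge-disjoint triangles. Conversely, firing the vertices in a fixed order, each sending one brush
along each remaining edge, shows `B(G) ≤ ∑ᵥ (d⁺(v) - d⁻(v))⁺`, where `d⁺`, `d⁻` count later and
earlier neighbours. For a strip of `r` triangles glued at vertices this sum is `2`.
-/

open Function

structure IsFort (G : SimpleGraph V) (F : Set V) : Prop where
  nonempty : F.Nonempty
  exists_ne_adj : ∀ ⦃v⦄, v ∉ F → ∀ ⦃w⦄, w ∈ F → G.Adj v w → ∃ u ∈ F, u ≠ w ∧ G.Adj v u

lemma ZFClosure.notMem_of_isFort {G : SimpleGraph V} {S F : Set V} (hF : IsFort G F)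
    (hSF : Disjoint S F) {v : V} (hv : ZFClosure G S v) : v ∉ F := by
  induction hv with
  | init hv => exact hSF.notMem_of_mem_left hv
  | force _ hadj _ hvF hothers =>
    intro hw
    obtain ⟨u, huF, huw, hvu⟩ := hF.exists_ne_adj hvF hw hadj
    exact hothers u hvu huw huF

lemma IsZeroForcingSet.inter_nonempty_of_isFort {G : SimpleGraph V} {S F : Set V}
    (hS : IsZeroForcingSet G S) (hF : IsFort G F) : (S ∩ F).Nonempty := by
  refine Set.not_disjoint_iff_nonempty_inter.1 fun hSF => ?_
  obtain ⟨w, hw⟩ := hF.nonempty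
  exact ZFClosure.notMem_of_isFort hF hSF (hS w) hw

lemma card_le_zfNumber_of_isFort [Finite V] {ι : Type*} {G : SimpleGraph V} (F : ι → Set V)
    (hF : ∀ i, IsFort G (F i)) (hdisj : Pairwise (Disjoint on F)) : Nat.card ι ≤ zfNumber G := by
  refine le_csInf ⟨_, Set.univ, fun v => .init (Set.mem_univ v), rfl⟩ ?_
  rintro _ ⟨S, hS, rfl⟩
  choose g hgS hgF using fun i => hS.inter_nonempty_of_isFort (hF i)
  rw [← Set.ncard_univ]
  refine Set.ncard_le_ncard_of_injOn g (fun i _ => hgS i) (fun i _ j _ hij => ?_)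
  by_contra hne
  exact (hdisj hne).notMem_of_mem_left (hgF i) (hij ▸ hgF j)

lemma isFort_lineGraph_of_isClique {G : SimpleGraph V} {T : Set V} (hT : G.IsClique T)
    (h3 : 2 < T.ncard) : IsFort G.lineGraph (Subtype.val ⁻¹' T.sym2) := by
  have hfin : T.Finite := Set.finite_of_ncard_pos (by omega)
  constructor
  · obtain ⟨a, b, -, ha, hb, -, hab, -, -⟩ := (Set.two_lt_ncard_iff hfin).1 h3
    exact ⟨⟨s(a, b), hT ha hb hab⟩, ⟨ha, hb⟩⟩
  · rintro e he f hf hef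
    rw [SimpleGraph.lineGraph_adj_iff_exists] at hef
    obtain ⟨-, v, hve, hvf⟩ := hef
    obtain ⟨w, hfw⟩ := Sym2.mem_iff_exists.1 hvf
    have hv : v ∈ T := (Set.mk_mem_sym2_iff.1 (show s(v, w) ∈ T.sym2 from hfw ▸ hf)).1
    obtain ⟨c, ⟨hc, hcv⟩, hcw⟩ := Set.exists_ne_of_one_lt_ncard (s := T \ {v})
      (by have := Set.ncard_sdiff_singleton_add_one hv hfin; omega) w
    have hvc : v ≠ c := Ne.symm hcv
    refine ⟨⟨s(v, c), hT hv hc hvc⟩, ⟨hv, hc⟩, fun h => hcw ?_, ?_⟩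
    · exact Sym2.congr_right.1 ((congrArg Subtype.val h).trans hfw)
    · rw [SimpleGraph.lineGraph_adj_iff_exists]
      refine ⟨fun h => he (h ▸ ⟨hv, hc⟩), v, hve, Sym2.mem_mk_left v c⟩

section Ordered

variable {W : Type*} [LT W] (G : SimpleGraph W)

noncomputable def forwardDegree (v : W) : ℕ := {w | G.Adj v w ∧ v < w}.ncard

noncomputable def backwardDegree (v : W) : ℕ := {w | G.Adj v w ∧ w < v}.ncard

end Ordered

section Firing

variable {n : ℕ} (G : SimpleGraph (Fin n)) (ω : Fin n → ℕ)

/-- The state after the vertices `0, …, k - 1` have fired in this order, each sending one brush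
along each of its dirty edges: a vertex that has not fired holds its initial brushes plus one
brush from each earlier neighbour. -/
noncomputable def firingConfig (k : ℕ) : BrushConfig (Fin n) where
  fired := {v | v.val < k}
  dirty := {e | e ∈ G.edgeSet ∧ ∀ v ∈ e, k ≤ v.val}
  brushes w := if w.val < k then 0 else ω w + {u | G.Adj w u ∧ u.val < k}.ncard

open Classical in
lemma ncard_adj_lt_succ (w v : Fin n) :
    {u | G.Adj w u ∧ u.val < v.val + 1}.ncard =
      {u | G.Adj w u ∧ u.val < v.val}.ncard + if G.Adj w v then 1 else 0 := by
  split_ifs with h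
  · rw [← Set.ncard_insert_of_notMem (a := v) (by simp)]
    congr 1
    ext u
    simp only [Set.mem_ofPred_eq, Set.mem_insert_iff, Nat.lt_succ_iff_lt_or_eq, Fin.val_inj]
    grind
  · congr 1
    ext u
    simp only [Set.mem_ofPred_eq, Nat.lt_succ_iff_lt_or_eq, Fin.val_inj]
    grind

lemma firingConfig_dirty_incident_subset (v : Fin n) :
    {e ∈ (firingConfig G ω v.val).dirty | v ∈ e} ⊆
      (fun w => s(v, w)) '' {w | G.Adj v w ∧ v < w} := by
  rintro e ⟨⟨he, hge⟩, hve⟩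
  obtain ⟨w, rfl⟩ := Sym2.mem_iff_exists.1 hve
  have hvw : G.Adj v w := he
  exact ⟨w, ⟨hvw, Fin.lt_def.2
    (lt_of_le_of_ne (hge w (Sym2.mem_mk_right v w)) (Fin.val_ne_of_ne hvw.ne))⟩, rfl⟩

lemma firingConfig_brushes_succ (v w : Fin n) :
    (firingConfig G ω (v.val + 1)).brushes w =
      (if w = v then 0 else (firingConfig G ω v.val).brushes w) +
        (firingConfig G ω v.val).dirty.indicator (fun _ => 1) s(v, w) := by
  classical
  have hdirty : s(v, w) ∈ (firingConfig G ω v.val).dirty ↔ G.Adj v w ∧ v.val ≤ w.val := by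
    simp [firingConfig]
  rw [Set.indicator_apply]
  simp only [hdirty]
  simp only [firingConfig]
  rw [ncard_adj_lt_succ]
  rcases lt_trichotomy w.val v.val with hwv | hwv | hwv
  · simp [hwv, Nat.lt_add_one_of_lt hwv, Fin.ne_of_val_ne hwv.ne, hwv.not_ge]
  · simp [Fin.ext hwv]
  · simp [hwv.not_gt, not_le.2 (show v < w from hwv), Fin.ne_of_val_ne hwv.ne', hwv.le,
      G.adj_comm, add_assoc]

lemma brushStep_firingConfig (restricted : Bool) (v : Fin n)
    (hv : forwardDegree G v ≤ ω v + backwardDegree G v) :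
    BrushStep G restricted (firingConfig G ω v.val) (firingConfig G ω (v.val + 1)) := by
  refine ⟨v, fun _ => 1, by simp [firingConfig], fun _ _ _ => by cases restricted <;> simp,
    ?_, ?_, ?_, fun w => by convert firingConfig_brushes_succ G ω v w⟩
  · calc (∑ᶠ e ∈ {e ∈ (firingConfig G ω v.val).dirty | v ∈ e}, 1)
        _ = {e ∈ (firingConfig G ω v.val).dirty | v ∈ e}.ncard := finsum_one
        _ ≤ ((fun w => s(v, w)) '' {w | G.Adj v w ∧ v < w}).ncard :=
          Set.ncard_le_ncard (firingConfig_dirty_incident_subset G ω v)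
        _ ≤ forwardDegree G v := Set.ncard_image_le
        _ ≤ ω v + backwardDegree G v := hv
        _ = (firingConfig G ω v.val).brushes v := by
          simp only [firingConfig, lt_irrefl, if_false]
          rfl
  · ext u
    simp only [firingConfig, Set.mem_ofPred_eq, Set.mem_insert_iff, Fin.ext_iff]
    omega
  · ext e
    induction e using Sym2.ind with
    | _ a b =>
      simp only [firingConfig, Set.mem_ofPred_eq, Sym2.mem_iff, forall_eq_or_imp, forall_eq]
      simp only [Fin.ext_iff, and_assoc]
      exact and_congr_right fun _ => by omega

lemma reflTransGen_firingConfig (restricted : Bool)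
    (hω : ∀ v, forwardDegree G v ≤ ω v + backwardDegree G v) :
    ∀ k ≤ n, Relation.ReflTransGen (BrushStep G restricted) (firingConfig G ω 0)
      (firingConfig G ω k)
  | 0, _ => .refl
  | k + 1, hk => (reflTransGen_firingConfig restricted hω k (by omega)).tail
      (brushStep_firingConfig G ω restricted ⟨k, hk⟩ (hω _))

theorem cleans_of_forwardDegree_le (restricted : Bool)
    (hω : ∀ v, forwardDegree G v ≤ ω v + backwardDegree G v) : Cleans G restricted ω := by
  refine ⟨firingConfig G ω n, ?_, Set.eq_univ_of_forall fun v => v.isLt⟩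
  have hinit : firingConfig G ω 0 = ⟨∅, G.edgeSet, ω⟩ := by
    simp [firingConfig]
  exact hinit ▸ reflTransGen_firingConfig G ω restricted hω n le_rfl

theorem brushNumber_le_finsum_forwardDegree_sub_backwardDegree :
    brushNumber G ≤ ∑ᶠ v, (forwardDegree G v - backwardDegree G v) :=
  Nat.sInf_le ⟨_, cleans_of_forwardDegree_le G _ false fun _ => le_tsub_add, rfl⟩

end Firing

/-- The triangles `{2i, 2i+1, 2i+2}` for `i < r`, consecutive ones sharing a vertex. -/
def triangleStrip (r : ℕ) : SimpleGraph (Fin (2 * r + 1)) :=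
  SimpleGraph.fromRel fun u v => v.val = u.val + 1 ∨ (u.val % 2 = 0 ∧ v.val = u.val + 2)

namespace triangleStrip

def triangle (r i : ℕ) : Set (Fin (2 * r + 1)) := {v | 2 * i ≤ v.val ∧ v.val ≤ 2 * i + 2}

variable {r : ℕ}

lemma adj_iff {u v : Fin (2 * r + 1)} : (triangleStrip r).Adj u v ↔ u.val ≠ v.val ∧
    (v.val = u.val + 1 ∨ (u.val % 2 = 0 ∧ v.val = u.val + 2) ∨
      u.val = v.val + 1 ∨ (v.val % 2 = 0 ∧ u.val = v.val + 2)) := by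
  simp [triangleStrip, Fin.ext_iff, or_assoc]

lemma isClique_triangle (i : ℕ) : (triangleStrip r).IsClique (triangle r i) := by
  intro u hu v hv huv
  simp only [triangle, Set.mem_ofPred_eq] at hu hv
  rw [adj_iff]
  have := Fin.val_ne_of_ne huv
  omega

lemma two_lt_ncard_triangle {i : ℕ} (hi : i < r) : 2 < (triangle r i).ncard := by
  rw [Set.two_lt_ncard_iff]
  refine ⟨⟨2 * i, by omega⟩, ⟨2 * i + 1, by omega⟩, ⟨2 * i + 2, by omega⟩, ?_⟩
  simp [triangle, Fin.ext_iff]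

lemma le_zfNumber_lineGraph : r ≤ zfNumber (triangleStrip r).lineGraph := by
  have h := card_le_zfNumber_of_isFort (G := (triangleStrip r).lineGraph)
    (fun i : Fin r => Subtype.val ⁻¹' (triangle r i).sym2)
    (fun i => isFort_lineGraph_of_isClique (isClique_triangle i)
      (two_lt_ncard_triangle i.isLt)) ?_
  · simpa using h
  · intro i j hij
    refine Set.disjoint_left.2 fun ⟨e, he⟩ hi hj => ?_
    induction e using Sym2.ind with
    | _ a b =>
      have hab : (triangleStrip r).Adj a b := he
      rw [adj_iff] at hab
      simp only [Set.mem_preimage, Set.mk_mem_sym2_iff, triangle, Set.mem_ofPred_eq] at hi hj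
      exact hij (Fin.ext (by omega))

lemma forwardDegree_le_backwardDegree {v : Fin (2 * r + 1)} (hv : v ≠ 0) :
    forwardDegree (triangleStrip r) v ≤ backwardDegree (triangleStrip r) v := by
  have hv : v.val ≠ 0 := fun h => hv (Fin.ext h)
  -- reflection through `v` sends later neighbours to earlier ones
  refine Set.ncard_le_ncard_of_injOn (fun w => ⟨v - (w - v), by omega⟩) ?_ ?_ (Set.toFinite _)
  · rintro w ⟨hvw, hlt⟩
    rw [adj_iff] at hvw
    simp only [Set.mem_ofPred_eq, adj_iff, Fin.lt_def] at hlt ⊢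
    omega
  · rintro w₁ ⟨hvw₁, hlt₁⟩ w₂ ⟨hvw₂, hlt₂⟩ h
    rw [adj_iff] at hvw₁ hvw₂
    simp only [Fin.lt_def, Fin.ext_iff] at hlt₁ hlt₂ h ⊢
    omega

lemma forwardDegree_zero_le_two : forwardDegree (triangleStrip r) 0 ≤ 2 := by
  calc forwardDegree (triangleStrip r) 0
      _ ≤ ({1, 2} : Set ℕ).ncard := by
        refine Set.ncard_le_ncard_of_injOn Fin.val ?_ Fin.val_injective.injOn
        rintro w ⟨hw, -⟩
        rw [adj_iff] at hw
        simp only [Set.mem_insert_iff, Set.mem_singleton_iff, Fin.val_zero] at hw ⊢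
        omega
      _ = 2 := Set.ncard_pair (by norm_num)

lemma brushNumber_le_two : brushNumber (triangleStrip r) ≤ 2 := by
  refine (brushNumber_le_finsum_forwardDegree_sub_backwardDegree _).trans ?_
  rw [finsum_eq_single _ 0 fun v hv => Nat.sub_eq_zero_of_le (forwardDegree_le_backwardDegree hv)]
  exact Nat.sub_le_of_le_add (forwardDegree_zero_le_two.trans (Nat.le_add_right 2 _))

end triangleStrip

theorem no_constant_zfNumber_lineGraph_le_mul_brushNumber :
    ¬ ∃ c : ℝ, ∀ (V : Type) (_ : Fintype V) (G : SimpleGraph V),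
      (zfNumber G.lineGraph : ℝ) ≤ c * (brushNumber G : ℝ) := by
  rintro ⟨c, hc⟩
  obtain ⟨r, hr⟩ := exists_nat_gt (2 * |c|)
  have hZ : (r : ℝ) ≤ zfNumber (triangleStrip r).lineGraph := by
    exact_mod_cast triangleStrip.le_zfNumber_lineGraph
  have hB : (brushNumber (triangleStrip r) : ℝ) ≤ 2 := by
    exact_mod_cast triangleStrip.brushNumber_le_two
  have hcB : c * brushNumber (triangleStrip r) ≤ 2 * |c| :=
    calc c * brushNumber (triangleStrip r)
        _ ≤ |c| * brushNumber (triangleStrip r) :=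
          mul_le_mul_of_nonneg_right (le_abs_self c) (Nat.cast_nonneg _)
        _ ≤ |c| * 2 := mul_le_mul_of_nonneg_left hB (abs_nonneg c)
        _ = 2 * |c| := mul_comm _ _
  linarith [hc _ inferInstance (triangleStrip r)]

end Paper
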